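/- In a footed MCFTG every generated pattern is footed; consequently the combinatorial core holds: if h is a simple tree homomorphism over N ∪ Σ mapping each nonterminal to a footed pattern of the same rank and each terminal σ to σ(x_1,…,x_{rk(σ)}), then the image ĥ(t) of every footed pattern t is again a footed pattern (of the same rank). -/

import Mathlib

inductive PTree (S : Type) : Type where
  | var  : ℕ → PTree S
  | node : S → List (PTree S) → PTree S

namespace PTree

variable {S D O : Type}

/-- The number of occurrences of the variable `x_i` in a tree. -/
def countVar (i : ℕ) : PTree S → ℕ
  | var j => if j = i then 1 else 0
  | node _ ts => (ts.attach.map (fun x => countVar i x.1)).sum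
  decreasing_by simp only [PTree.node.sizeOf_spec]; have := List.sizeOf_lt_of_mem x.2; omega

/-- The number of occurrences of the symbol `s` in a tree. -/
def countSym [DecidableEq S] (s : S) : PTree S → ℕ
  | var _ => 0
  | node s' ts => (if s' = s then 1 else 0) + (ts.attach.map (fun x => countSym s x.1)).sum
  decreasing_by simp only [PTree.node.sizeOf_spec]; have := List.sizeOf_lt_of_mem x.2; omega

/-- First-order substitution: replace each variable `x_i` by `f i`. -/
def subst (f : ℕ → PTree S) : PTree S → PTree S
  | var i => f i
  | node s ts => node s (ts.attach.map (fun x => subst f x.1))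
  decreasing_by simp only [PTree.node.sizeOf_spec]; have := List.sizeOf_lt_of_mem x.2; omega

/-- The tree map `ĥ` induced by a tree homomorphism `h`. -/
def hmap (h : S → PTree D) : PTree S → PTree D
  | var i => var i
  | node s ts =>
      subst (fun i => (ts.attach.map (fun x => hmap h x.1)).getD (i - 1) (var i)) (h s)
  decreasing_by simp only [PTree.node.sizeOf_spec]; have := List.sizeOf_lt_of_mem x.2; omega

/-- Well-formedness of a tree over a ranked alphabet: the number of children of
a node equals the rank of its label. -/
inductive WF (rk : S → ℕ) : PTree S → Prop where
  | var (i : ℕ) : WF rk (var i)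
  | node (s : S) (ts : List (PTree S)) :
      ts.length = rk s → (∀ t ∈ ts, WF rk t) → WF rk (node s ts)

/-- `t` is a `k`-ary pattern: each of the variables `x_1, …, x_k` occurs exactly once
in `t`, and no other variable occurs in `t`. -/
def IsPattern (k : ℕ) (t : PTree S) : Prop :=
  ∀ i : ℕ, countVar i t = if 1 ≤ i ∧ i ≤ k then 1 else 0

/-- The left-to-right sequence of (indices of) variable occurrences in a tree. -/
def varYield : PTree S → List ℕ
  | var i => [i]
  | node _ ts => (ts.attach.map (fun x => varYield x.1)).flatten
  decreasing_by simp only [PTree.node.sizeOf_spec]; have := List.sizeOf_lt_of_mem x.2; omega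

/-- The subtree at a given position (children of a node are numbered `0, 1, …`). -/
def subt? : List ℕ → PTree S → Option (PTree S)
  | [], t => some t
  | _ :: _, var _ => none
  | i :: p, node _ ts =>
      match ts[i]? with
      | some t => subt? p t
      | none => none

/-- Plug the tree `u` into the hole `□` (encoded as the variable `x_0`) of a context `c`. -/
def plug (c u : PTree S) : PTree S :=
  subst (fun i => if i = 0 then u else var i) c

/-- `init(s) = s(x_1, …, x_{rk s})`. -/
def initT (rk : S → ℕ) (s : S) : PTree S :=
  node s ((List.range (rk s)).map (fun i => var (i + 1)))

/-- The tree homomorphism corresponding to the second-order substitution `[σs ← us]`: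
it maps the `i`-th symbol of `σs` to the `i`-th pattern of `us` and any other symbol
`τ` to `init(τ)`. -/
def soHom [DecidableEq S] (rk : S → ℕ) (σs : List S) (us : List (PTree S)) : S → PTree S :=
  fun s => us.getD (σs.idxOf s) (initT rk s)

/-- Second-order substitution `t[σs ← us]`. -/
def soSubst [DecidableEq S] (rk : S → ℕ) (σs : List S) (us : List (PTree S)) :
    PTree S → PTree S :=
  hmap (soHom rk σs us)

/-- The symbol `s` occurs in the tree `t`. -/
def Occurs [DecidableEq S] (s : S) (t : PTree S) : Prop :=
  0 < countSym s t

/-- A tree of rank `k` is footed if `k = 0`, or `k ≥ 1` and it has a foot node: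
a position labeled by a symbol of rank `k` whose `i`-th child is the variable `x_i`. -/
def Footed (rk : S → ℕ) (k : ℕ) (t : PTree S) : Prop :=
  k = 0 ∨ ∃ (p : List ℕ) (s : S) (cs : List (PTree S)),
    subt? p t = some (node s cs) ∧ rk s = k ∧ ∀ i < k, cs[i]? = some (var (i + 1))

end PTree

/-!
Counts and well-formedness of `ĥ(t)` follow by induction on `t`: at a node `s(t₁, …, tₙ)`,
`ĥ` substitutes `ĥ(tᵢ)` for the unique occurrence of `xᵢ` in the pattern `h(s)`.
For footedness, follow the path to the foot node `s₀(x₁, …, x_k)` of `t`. The foot node itself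
is mapped to `h(s₀)`, which is footed of rank `k`. A node `s(t₁, …, tₙ)` on the path, with `tᵢ`
the next node, is mapped to a tree having `ĥ(tᵢ)` as the subtree at the position of `xᵢ` in
`h(s)`, so a foot node of `ĥ(tᵢ)` is one of `ĥ(t)`.
-/

namespace PTree

variable {S D : Type}

@[elab_as_elim]
theorem induction {motive : PTree S → Prop} (var : ∀ i, motive (PTree.var i))
    (node : ∀ s ts, (∀ t ∈ ts, motive t) → motive (PTree.node s ts)) : ∀ t, motive t
  | .var i => var i
  | .node s ts => node s ts fun t _ => induction var node t
  decreasing_by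
    simp only [PTree.node.sizeOf_spec]; have := List.sizeOf_lt_of_mem ‹t ∈ ts›; omega

theorem countVar_var (i j : ℕ) : countVar i (var j : PTree S) = if j = i then 1 else 0 := by
  simp [countVar]

theorem countVar_node (i : ℕ) (s : S) (ts : List (PTree S)) :
    countVar i (node s ts) = (ts.map (countVar i)).sum := by
  rw [countVar, List.attach_map_val]

theorem subst_var (f : ℕ → PTree S) (i : ℕ) : subst f (var i) = f i := by
  simp [subst]

theorem subst_node (f : ℕ → PTree S) (s : S) (ts : List (PTree S)) :
    subst f (node s ts) = node s (ts.map (subst f)) := by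
  rw [subst, List.attach_map_val]

theorem hmap_var (h : S → PTree D) (i : ℕ) : hmap h (var i) = var i := by
  simp [hmap]

theorem hmap_node (h : S → PTree D) (s : S) (ts : List (PTree S)) :
    hmap h (node s ts) = subst (fun i => (ts.map (hmap h)).getD (i - 1) (var i)) (h s) := by
  rw [hmap, List.attach_map_val]

theorem varYield_var (i : ℕ) : varYield (var i : PTree S) = [i] := by
  simp [varYield]

theorem varYield_node (s : S) (ts : List (PTree S)) :
    varYield (node s ts) = ts.flatMap varYield := by
  rw [varYield, List.attach_map_val, List.flatMap_def]

theorem subt?_nil (t : PTree S) : subt? [] t = some t := by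
  simp [subt?]

theorem subt?_cons_node (i : ℕ) (p : List ℕ) (s : S) (ts : List (PTree S)) :
    subt? (i :: p) (node s ts) = ts[i]?.bind (subt? p) := by
  rw [subt?]; cases ts[i]? <;> rfl

theorem WF.length_eq {rk : S → ℕ} {s : S} {ts : List (PTree S)} (h : WF rk (PTree.node s ts)) :
    ts.length = rk s := by
  cases h; assumption

theorem WF.of_mem {rk : S → ℕ} {s : S} {ts : List (PTree S)} (h : WF rk (PTree.node s ts))
    {t : PTree S} (ht : t ∈ ts) : WF rk t := by
  cases h; simp_all

theorem countVar_eq_count_varYield (i : ℕ) (t : PTree S) :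
    countVar i t = (varYield t).count i := by
  induction t using PTree.induction with
  | var j => simp [countVar_var, varYield_var, List.count_singleton]
  | node s ts ih =>
    rw [countVar_node, varYield_node, List.count_flatMap]
    exact congrArg List.sum (List.map_congr_left ih)

theorem varYield_subst (f : ℕ → PTree S) (t : PTree S) :
    varYield (subst f t) = (varYield t).flatMap (fun j => varYield (f j)) := by
  induction t using PTree.induction with
  | var i => simp [subst_var, varYield_var]
  | node s ts ih =>
    rw [subst_node, varYield_node, varYield_node, List.flatMap_assoc, List.flatMap_map]
    exact List.flatMap_congr ih

theorem countVar_subst (f : ℕ → PTree S) (t : PTree S) (i : ℕ) :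
    countVar i (subst f t) = ((varYield t).map (fun j => countVar i (f j))).sum := by
  rw [countVar_eq_count_varYield, varYield_subst, List.count_flatMap]
  exact congrArg List.sum (List.map_congr_left fun j _ => (countVar_eq_count_varYield i (f j)).symm)

theorem IsPattern.varYield_perm {k : ℕ} {t : PTree S} (ht : IsPattern k t) :
    (varYield t).Perm (List.range' 1 k) := by
  refine List.perm_iff_count.2 fun j => ?_
  rw [← countVar_eq_count_varYield, ht j]
  split_ifs with hj
  · exact (List.count_eq_one_of_mem List.nodup_range' (List.mem_range'_1.2 (by omega))).symm
  · exact (List.count_eq_zero.2 fun hmem => hj (by simp [List.mem_range'_1] at hmem; omega)).symm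

theorem subst_eq_self {f : ℕ → PTree S} {t : PTree S}
    (hf : ∀ j, 0 < countVar j t → f j = var j) : subst f t = t := by
  induction t using PTree.induction with
  | var i => simpa [subst_var, countVar_var] using hf i
  | node s ts ih =>
    rw [subst_node, List.map_congr_left (g := id), List.map_id]
    refine fun u hu => ih u hu fun j hj => hf j ?_
    rw [countVar_node]
    exact hj.trans_le (List.le_sum_of_mem (List.mem_map_of_mem hu))

theorem subt?_append (p q : List ℕ) (t : PTree S) :
    subt? (p ++ q) t = (subt? p t).bind (subt? q) := by
  induction p generalizing t with
  | nil => simp [subt?_nil]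
  | cons i p ih =>
    cases t with
    | var j => simp [subt?]
    | node s ts => cases hi : ts[i]? <;> simp [subt?_cons_node, hi, ih]

theorem subt?_subst (f : ℕ → PTree S) {p : List ℕ} {t u : PTree S}
    (h : subt? p t = some u) : subt? p (subst f t) = some (subst f u) := by
  induction p generalizing t with
  | nil => simp_all [subt?_nil]
  | cons i p ih =>
    cases t with
    | var j => simp [subt?] at h
    | node s ts =>
      rw [subt?_cons_node, Option.bind_eq_some_iff] at h
      obtain ⟨w, hw, hwu⟩ := h
      rw [subst_node, subt?_cons_node, List.getElem?_map, hw]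
      exact ih hwu

theorem exists_subt?_eq_var {j : ℕ} {t : PTree S} (h : 0 < countVar j t) :
    ∃ q, subt? q t = some (var j) := by
  induction t using PTree.induction with
  | var i =>
    obtain rfl : i = j := by by_contra hij; simp [countVar_var, hij] at h
    exact ⟨[], subt?_nil _⟩
  | node s ts ih =>
    obtain ⟨u, hu, hju⟩ : ∃ u ∈ ts, 0 < countVar j u := by
      by_contra! hts
      rw [countVar_node, List.sum_eq_zero (by simpa using hts)] at h
      exact h.false
    obtain ⟨q, hq⟩ := ih u hu hju
    obtain ⟨i, hi⟩ := List.getElem?_of_mem hu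
    exact ⟨i :: q, by rw [subt?_cons_node, hi, Option.bind_some, hq]⟩

theorem Footed.of_subt? {rk : S → ℕ} {k : ℕ} {p : List ℕ} {t u : PTree S}
    (hp : subt? p t = some u) (hu : Footed rk k u) : Footed rk k t := by
  rcases hu with hk | ⟨q, s, cs, hq, hs, hcs⟩
  · exact Or.inl hk
  · exact Or.inr ⟨p ++ q, s, cs, by rw [subt?_append, hp, Option.bind_some, hq], hs, hcs⟩

theorem footed_initT (rk : S → ℕ) (s : S) : Footed rk (rk s) (initT rk s) :=
  Or.inr ⟨[], s, _, subt?_nil _, rfl, fun i hi => by simp [List.getElem?_range hi]⟩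

section Homomorphism

variable {rk : S → ℕ} {h : S → PTree S}

theorem WF.subst {f : ℕ → PTree S} (hf : ∀ i, WF rk (f i)) {t : PTree S} (ht : WF rk t) :
    WF rk (PTree.subst f t) := by
  induction t using PTree.induction with
  | var i => rw [subst_var]; exact hf i
  | node s ts ih =>
    rw [subst_node]
    refine .node _ _ (by simpa using ht.length_eq) fun u hu => ?_
    obtain ⟨v, hv, rfl⟩ := List.mem_map.1 hu
    exact ih v hv (ht.of_mem hv)

theorem WF.hmap (hwf : ∀ s, WF rk (h s)) {t : PTree S} (ht : WF rk t) :
    WF rk (PTree.hmap h t) := by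
  induction t using PTree.induction with
  | var i => rw [hmap_var]; exact .var i
  | node s ts ih =>
    rw [hmap_node]
    refine (hwf s).subst fun i => ?_
    rcases lt_or_ge (i - 1) ts.length with hi | hi
    · rw [List.getD_eq_getElem _ _ (by simpa using hi), List.getElem_map]
      exact ih _ (List.getElem_mem hi) (ht.of_mem (List.getElem_mem hi))
    · rw [List.getD_eq_default _ _ (by simpa using hi)]
      exact .var i

theorem countVar_hmap (hpat : ∀ s, IsPattern (rk s) (h s)) {t : PTree S} (ht : WF rk t)
    (i : ℕ) : countVar i (hmap h t) = countVar i t := by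
  induction t using PTree.induction with
  | var j => rw [hmap_var]
  | node s ts ih =>
    rw [hmap_node, countVar_subst, ((hpat s).varYield_perm.map _).sum_eq, countVar_node,
      ← ht.length_eq]
    congr 1
    refine List.ext_getElem (by simp) fun j hj hj' => ?_
    have hjts : j < ts.length := by simpa using hj'
    rw [List.getElem_map, List.getElem_range', show 1 + 1 * j - 1 = j by omega,
      List.getD_eq_getElem _ _ (by simpa using hjts), List.getElem_map, List.getElem_map]
    exact ih _ (List.getElem_mem hjts) (ht.of_mem (List.getElem_mem hjts))

theorem hmap_initT {s : S} (hpat : IsPattern (rk s) (h s)) : hmap h (initT rk s) = h s := by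
  rw [initT, hmap_node]
  refine subst_eq_self fun j hj => ?_
  have hjs : 1 ≤ j ∧ j ≤ rk s := by
    by_contra hj'
    rw [hpat j, if_neg hj'] at hj
    exact hj.false
  rw [List.getD_eq_getElem _ _ (by simp only [List.length_map, List.length_range]; omega)]
  simp only [List.getElem_map, List.getElem_range, hmap_var, Nat.sub_add_cancel hjs.1]

theorem footed_hmap_of_subt? (hpat : ∀ s, IsPattern (rk s) (h s))
    (hfoot : ∀ s, Footed rk (rk s) (h s)) {p : List ℕ} {t : PTree S} (ht : WF rk t)
    {s₀ : S} {cs : List (PTree S)} (hp : subt? p t = some (node s₀ cs))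
    (hcs : ∀ i < rk s₀, cs[i]? = some (var (i + 1))) : Footed rk (rk s₀) (hmap h t) := by
  induction p generalizing t with
  | nil =>
    obtain rfl : t = node s₀ cs := by simpa [subt?_nil] using hp
    have hcs_eq : cs = (List.range (rk s₀)).map (fun i => var (i + 1)) := by
      refine List.ext_getElem? fun i => ?_
      rcases lt_or_ge i (rk s₀) with hi | hi
      · simp [hcs i hi, List.getElem?_range hi]
      · have hlen := ht.length_eq
        rw [List.getElem?_eq_none (by omega), List.getElem?_eq_none (by simpa using hi)]
    rw [hcs_eq, ← initT, hmap_initT (hpat s₀)]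
    exact hfoot s₀
  | cons i p ih =>
    cases t with
    | var j => simp [subt?] at hp
    | node s ts =>
      rw [subt?_cons_node, Option.bind_eq_some_iff] at hp
      obtain ⟨u, hu, hpu⟩ := hp
      have hi : i < rk s := ht.length_eq ▸ (List.getElem?_eq_some_iff.1 hu).1
      obtain ⟨q, hq⟩ : ∃ q, subt? q (h s) = some (var (i + 1)) :=
        exists_subt?_eq_var (by rw [hpat s, if_pos ⟨by omega, hi⟩]; exact one_pos)
      refine (ih (ht.of_mem (List.mem_of_getElem? hu)) hpu).of_subt? (p := q) ?_
      rw [hmap_node, subt?_subst _ hq, subst_var]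
      simp [hu]

end Homomorphism

end PTree

open PTree in
/-- In a footed MCFTG every generated pattern is footed — the combinatorial core: if a
simple tree homomorphism `h` over `N ∪ Σ` maps every nonterminal to a footed pattern of
the same rank and every terminal `σ` to `σ(x_1, …, x_{rk σ})`, then the image `ĥ(t)` of
every footed pattern `t` is again a footed pattern of the same rank. -/
theorem stmt19 {S : Type} (rk : S → ℕ) (isN : S → Prop) (h : S → PTree S)
    (hwfh : ∀ s : S, WF rk (h s))
    (hpath : ∀ s : S, IsPattern (rk s) (h s))
    (hfooted : ∀ s : S, isN s → Footed rk (rk s) (h s))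
    (hterm : ∀ s : S, ¬ isN s → h s = initT rk s)
    (k : ℕ) (t : PTree S)
    (hwft : WF rk t) (hpatt : IsPattern k t) (hft : Footed rk k t) :
    WF rk (hmap h t) ∧ IsPattern k (hmap h t) ∧ Footed rk k (hmap h t) := by
  have hfoot : ∀ s, Footed rk (rk s) (h s) := fun s => by
    by_cases hs : isN s
    · exact hfooted s hs
    · exact hterm s hs ▸ footed_initT rk s
  refine ⟨hwft.hmap hwfh, fun i => by rw [countVar_hmap hpath hwft, hpatt i], ?_⟩
  rcases hft with hk | ⟨p, s₀, cs, hp, rfl, hcs⟩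
  · exact Or.inl hk
  · exact footed_hmap_of_subt? hpath hfoot hwft hp hcs
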